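/- For v_0 = 2/3 and v_1 = 1, the maximum, over all pure local strategy profiles that are Nash equilibria of NC_00(C_5) with the uniform type distribution, of the social welfare (the average over the 5 players of their expected payoffs) equals 23/30. -/

import Mathlib

open Finset

/-- The 6 questions/types of the game on the 5-cycle: `none` is `Tₐ = 11111`;
`some i` is the question `Tᵢ` giving input bit 1 to player `i` and 0 to the others. -/
abbrev C5Type := Option (ZMod 5)

/-- Input (type) bit of player `j` in question `t` of `MCG(C₅)`/`NC₀₀(C₅)`. -/
def inputBit : C5Type → ZMod 5 → ZMod 2
  | none, _ => 1
  | some i, j => if j = i then 1 else 0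

/-- The involved set of question `t`: all five players for `Tₐ`;
`{i-1, i, i+1}` for `Tᵢ`. -/
def involvedSet : C5Type → Finset (ZMod 5)
  | none => Finset.univ
  | some i => {i - 1, i, i + 1}

/-- The target parity bit of question `t`: `1` for `Tₐ` and `0` for each `Tᵢ`. -/
def targetBit : C5Type → ZMod 2
  | none => 1
  | some _ => 0

/-- Payoff of player `j` on (answer profile `s`, type `t`) in `NC₀₀(C₅)`:
`v_{s j}` if `s` wins on `t`, else `0`. -/
noncomputable def payoffOf (v0 v1 : ℝ) (j : ZMod 5) (s : ZMod 5 → ZMod 2)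
    (t : C5Type) : ℝ :=
  if ∑ k ∈ involvedSet t, s k = targetBit t then (if s j = 1 then v1 else v0) else 0

/-- Expected payoff of player `j` under the pure local strategy profile `f`
(player `i` answers `f i b` on type bit `b`), with the type uniform on the 6 types. -/
noncomputable def pureUtil (v0 v1 : ℝ) (f : ZMod 5 → ZMod 2 → ZMod 2) (j : ZMod 5) : ℝ :=
  (∑ t : C5Type, payoffOf v0 v1 j (fun i => f i (inputBit t i)) t) / 6

/-- The pure local strategy profile `f` is a Nash equilibrium of `NC₀₀(C₅)` with
the uniform type distribution: no player can strictly increase their expected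
payoff by unilaterally replacing their local function. -/
def IsNashEq (v0 v1 : ℝ) (f : ZMod 5 → ZMod 2 → ZMod 2) : Prop :=
  ∀ (i : ZMod 5) (g : ZMod 2 → ZMod 2),
    pureUtil v0 v1 (Function.update f i g) i ≤ pureUtil v0 v1 f i

/-! With `v₀ = 2/3` and `v₁ = 1`, eighteen times a player's expected payoff is the natural
number `2 n₀ + 3 n₁`, where `nₓ` counts the types on which the profile wins while the player
answers `x`. Equilibrium and welfare thus become statements about natural numbers over the
`4⁵` pure profiles, which are settled by exhaustive evaluation: the profile in which players
`0, 1` echo their bit and players `2, 3, 4` always answer `1` is an equilibrium of total scaled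
payoff `69 = 90 · 23/30`, and every profile of larger total has a profitable deviation. -/

def answerProfile (f : ZMod 5 → ZMod 2 → ZMod 2) (t : C5Type) : ZMod 5 → ZMod 2 :=
  fun i => f i (inputBit t i)

def Wins (s : ZMod 5 → ZMod 2) (t : C5Type) : Prop :=
  ∑ k ∈ involvedSet t, s k = targetBit t

instance (s : ZMod 5 → ZMod 2) (t : C5Type) : Decidable (Wins s t) :=
  inferInstanceAs (Decidable (_ = _))

def winCount (f : ZMod 5 → ZMod 2 → ZMod 2) (j : ZMod 5) (x : ZMod 2) : ℕ :=
  #{t | Wins (answerProfile f t) t ∧ answerProfile f t j = x}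

lemma payoffOf_eq (v0 v1 : ℝ) (j : ZMod 5) (s : ZMod 5 → ZMod 2) (t : C5Type) :
    payoffOf v0 v1 j s t =
      v0 * (if Wins s t ∧ s j = 0 then 1 else 0) + v1 * (if Wins s t ∧ s j = 1 then 1 else 0) := by
  unfold payoffOf
  change ite (Wins s t) _ _ = _
  obtain h | h : s j = 0 ∨ s j = 1 := by generalize s j = x; revert x; decide
  all_goals by_cases hw : Wins s t <;> simp [hw, h]

theorem pureUtil_eq_winCount (v0 v1 : ℝ) (f : ZMod 5 → ZMod 2 → ZMod 2) (j : ZMod 5) :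
    pureUtil v0 v1 f j = (v0 * winCount f j 0 + v1 * winCount f j 1) / 6 := by
  simp only [pureUtil, payoffOf_eq, sum_add_distrib, ← mul_sum, sum_boole, winCount]
  rfl

def score (f : ZMod 5 → ZMod 2 → ZMod 2) (j : ZMod 5) : ℕ :=
  2 * winCount f j 0 + 3 * winCount f j 1

lemma pureUtil_eq_score (f : ZMod 5 → ZMod 2 → ZMod 2) (j : ZMod 5) :
    pureUtil (2/3) 1 f j = score f j / 18 := by
  rw [pureUtil_eq_winCount, score]
  push_cast
  ring

lemma isNashEq_iff_score_le (f : ZMod 5 → ZMod 2 → ZMod 2) :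
    IsNashEq (2/3) 1 f ↔ ∀ i g, score (Function.update f i g) i ≤ score f i := by
  simp only [IsNashEq, pureUtil_eq_score, div_le_div_iff_of_pos_right (by norm_num : (0 : ℝ) < 18),
    Nat.cast_le]

lemma welfare_eq_sum_score (f : ZMod 5 → ZMod 2 → ZMod 2) :
    (∑ j, pureUtil (2/3) 1 f j) / 5 = (∑ j, score f j : ℕ) / 90 := by
  simp only [pureUtil_eq_score, ← sum_div, Nat.cast_sum]
  ring

theorem sum_score_le_of_forall_score_le (f : ZMod 5 → ZMod 2 → ZMod 2)
    (hf : ∀ i g, score (Function.update f i g) i ≤ score f i) : ∑ j, score f j ≤ 69 := by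
  -- Contrapositive form, so that the cheap test on the total is evaluated first.
  have key : ∀ f : ZMod 5 → ZMod 2 → ZMod 2,
      69 < ∑ j, score f j → ¬ ∀ i g, score (Function.update f i g) i ≤ score f i := by
    decide +kernel
  exact not_lt.1 fun h => key f h hf

def echoProfile : ZMod 5 → ZMod 2 → ZMod 2 :=
  fun i x => if i = 0 ∨ i = 1 then x else 1

/-- **Best classical social welfare of `NC₀₀(C₅)` at `v0 = 2/3`, `v1 = 1` is `23/30`.**
The maximum, over pure local strategy profiles that are Nash equilibria of
`NC₀₀(C₅)` with the uniform type distribution, of the social welfare (the average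
over the 5 players of their expected payoffs) equals `23/30`. -/
theorem best_nash_social_welfare_NC00 :
    IsGreatest {x : ℝ | ∃ f : ZMod 5 → ZMod 2 → ZMod 2,
        IsNashEq (2/3) 1 f ∧ x = (∑ j : ZMod 5, pureUtil (2/3) 1 f j) / 5}
      (23 / 30) := by
  constructor
  · refine ⟨echoProfile, (isNashEq_iff_score_le _).2 (by decide +kernel), ?_⟩
    rw [welfare_eq_sum_score, show ∑ j, score echoProfile j = 69 by decide +kernel]
    norm_num
  · rintro _ ⟨f, hf, rfl⟩
    have h : ((∑ j, score f j : ℕ) : ℝ) ≤ 69 :=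
      mod_cast sum_score_le_of_forall_score_le f ((isNashEq_iff_score_le f).1 hf)
    rw [welfare_eq_sum_score]
    linarith
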